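/- Reduction preserves phaser well-orderedness: if the phaser P is well-ordered and P reduces to Q by some task performing some operation, then Q is well-ordered. -/
import Mathlib


/-- Registration modes: signal-wait, signal-only, wait-only. -/
inductive Mode
  | SW | SO | WO
deriving DecidableEq

/-- A mode can signal iff it is SW or SO. -/
def Mode.CanSignal (r : Mode) : Prop := r = Mode.SW ∨ r = Mode.SO

/-- A mode can wait iff it is SW or WO. -/
def Mode.CanWait (r : Mode) : Prop := r = Mode.SW ∨ r = Mode.WO

/-- A view: a signal phase, a wait phase, and a registration mode. -/
structure View where
  sp : ℕ
  wp : ℕ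
  mode : Mode

def View.CanSignal (v : View) : Prop := v.mode.CanSignal

def View.CanWait (v : View) : Prop := v.mode.CanWait

/-- Well-formed views. -/
def View.WellFormed (v : View) : Prop :=
  (v.CanWait ∧ v.wp = v.sp) ∨ (v.CanWait ∧ v.wp + 1 = v.sp) ∨
  (v.mode = Mode.SO ∧ v.wp ≤ v.sp)

/-- Happens-before on views: v1 ≺ v2. -/
def View.HB (v1 v2 : View) : Prop :=
  v1.sp < v2.wp ∧ v1.CanSignal ∧ v2.CanWait

/-- Cannot-happen-before on views: v1 ⊵ v2. -/
def View.CHB (v1 v2 : View) : Prop :=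
  v1.mode = Mode.WO ∨ v1.sp ≥ v2.wp ∨ v2.mode = Mode.SO

/-- A phaser: a finite partial map from task identifiers (ℕ) to views. -/
abbrev Phaser := Finmap (fun _ : ℕ => View)

/-- Happens-before on phasers: P ≺ Q. -/
def Phaser.HB (P Q : Phaser) : Prop :=
  ∃ t t' v1 v2, P.lookup t = some v1 ∧ Q.lookup t' = some v2 ∧ View.HB v1 v2

/-- Cannot-happen-before on phasers: P ⊵ Q. -/
def Phaser.CHB (P Q : Phaser) : Prop :=
  ∀ t t' v1 v2, P.lookup t = some v1 → Q.lookup t' = some v2 → View.CHB v1 v2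

/-- May-happen-in-parallel on phasers: P ∥ Q. -/
def Phaser.Par (P Q : Phaser) : Prop := Phaser.CHB P Q ∧ Phaser.CHB Q P

/-- A well-formed phaser: every view in its range is well-formed. -/
def Phaser.WellFormed (P : Phaser) : Prop :=
  ∀ t v, P.lookup t = some v → v.WellFormed

/-- A well-ordered phaser: P ⊵ P. -/
def Phaser.WellOrdered (P : Phaser) : Prop := Phaser.CHB P P

/-- Phaser operations. -/
inductive Op
  | signal
  | wait
  | register (t' : ℕ) (r : Mode)
  | drop

/-- The reduction relation on phasers: P —(t,o)→ Q. -/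
inductive Reduces : Phaser → ℕ → Op → Phaser → Prop
  | signal {P : Phaser} {t : ℕ} {v : View} :
      P.lookup t = some v →
      v.CanSignal →
      (v.mode = Mode.SW → v.wp = v.sp) →
      Reduces P t Op.signal (P.insert t { v with sp := v.sp + 1 })
  | wait {P : Phaser} {t : ℕ} {v : View} :
      P.lookup t = some v →
      v.CanWait →
      (v.mode = Mode.SW → v.wp + 1 = v.sp) →
      (v.mode = Mode.SO ∨
        ∀ t' v', P.lookup t' = some v' → v'.CanSignal → v'.sp ≥ v.wp + 1) →
      Reduces P t Op.wait (P.insert t { v with wp := v.wp + 1 })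
  | register {P : Phaser} {t t' : ℕ} {r : Mode} {v : View} :
      t' ∉ P →
      P.lookup t = some v →
      (r.CanWait → v.CanWait) →
      (r.CanSignal → v.CanSignal) →
      Reduces P t (Op.register t' r) (P.insert t' { v with mode := r })
  | drop {P : Phaser} {t : ℕ} :
      t ∈ P →
      Reduces P t Op.drop (P.erase t)

/-- Single-step reduction: P ⟶ Q iff some task performs some operation. -/
def SReduces (P Q : Phaser) : Prop := ∃ t o, Reduces P t o Q

lemma lookup_insert_cases {P : Phaser} {a t : ℕ} {w v : View}
    (h : (P.insert a w).lookup t = some v) :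
    (t = a ∧ v = w) ∨ (t ≠ a ∧ P.lookup t = some v) := by
  by_cases ht : t = a
  · subst ht
    rw [Finmap.lookup_insert] at h
    exact Or.inl ⟨rfl, (Option.some_inj.mp h).symm⟩
  · rw [Finmap.lookup_insert_of_ne _ ht] at h
    exact Or.inr ⟨ht, h⟩

lemma not_canSignal {v : View} (h : ¬ v.CanSignal) : v.mode = Mode.WO := by
  cases hm : v.mode <;>
    simp [View.CanSignal, Mode.CanSignal, hm] at h ⊢

/-- reduction preserves phaser well-orderedness. -/
theorem ph_reduces_preserves_wellordered (P Q : Phaser)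
    (hwo : P.WellOrdered) (hr : ∃ t o, Reduces P t o Q) : Q.WellOrdered := by
  obtain ⟨t, o, hred⟩ := hr
  cases hred with
  | signal hl hcs hsw =>
    rename_i v
    intro t1 t2 v1 v2 h1 h2
    rcases lookup_insert_cases h1 with ⟨e1, rfl⟩ | ⟨n1, h1⟩ <;>
      rcases lookup_insert_cases h2 with ⟨e2, rfl⟩ | ⟨n2, h2⟩
    · rcases hwo t t v v hl hl with h | h | h
      · exact Or.inl h
      · exact Or.inr (Or.inl (by simp; omega))
      · exact Or.inr (Or.inr h)
    · rcases hwo t t2 v v2 hl h2 with h | h | h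
      · exact Or.inl h
      · exact Or.inr (Or.inl (by simp; omega))
      · exact Or.inr (Or.inr h)
    · rcases hwo t1 t v1 v h1 hl with h | h | h
      · exact Or.inl h
      · exact Or.inr (Or.inl h)
      · exact Or.inr (Or.inr h)
    · exact hwo t1 t2 v1 v2 h1 h2
  | wait hl hcw hsw hsync =>
    rename_i v
    intro t1 t2 v1 v2 h1 h2
    rcases lookup_insert_cases h1 with ⟨e1, rfl⟩ | ⟨n1, h1⟩ <;>
      rcases lookup_insert_cases h2 with ⟨e2, rfl⟩ | ⟨n2, h2⟩
    · -- new vs new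
      rcases hwo t t v v hl hl with h | _ | h
      · exact Or.inl h
      · rcases hcw with hm | hm
        · exact Or.inr (Or.inl (by simp [hsw hm]))
        · exact Or.inl hm
      · exact Or.inr (Or.inr h)
    · -- new vs old: sp unchanged
      rcases hwo t t2 v v2 hl h2 with h | h | h
      · exact Or.inl h
      · exact Or.inr (Or.inl h)
      · exact Or.inr (Or.inr h)
    · -- old vs new: need v1.sp ≥ v.wp + 1 (or WO / SO)
      rcases hsync with hso | hall
      · exact Or.inr (Or.inr hso)
      · by_cases hc : v1.CanSignal
        · exact Or.inr (Or.inl (hall t1 v1 h1 hc))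
        · exact Or.inl (not_canSignal hc)
    · exact hwo t1 t2 v1 v2 h1 h2
  | register hnew hl hw hs =>
    rename_i t' r v
    intro t1 t2 v1 v2 h1 h2
    rcases lookup_insert_cases h1 with ⟨e1, rfl⟩ | ⟨n1, h1⟩ <;>
      rcases lookup_insert_cases h2 with ⟨e2, rfl⟩ | ⟨n2, h2⟩
    · rcases hwo t t v v hl hl with h | h | h
      · -- v WO → r can't signal → r = WO
        left
        show r = Mode.WO
        cases hr : r with
        | SW => exact absurd (hs (Or.inl hr)) (by simp [View.CanSignal, Mode.CanSignal, h])
        | SO => exact absurd (hs (Or.inr hr)) (by simp [View.CanSignal, Mode.CanSignal, h])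
        | WO => rfl
      · exact Or.inr (Or.inl h)
      ·
        right; right
        show r = Mode.SO
        cases hr : r with
        | SW => exact absurd (hw (Or.inl hr)) (by simp [View.CanWait, Mode.CanWait, h])
        | SO => rfl
        | WO => exact absurd (hw (Or.inr hr)) (by simp [View.CanWait, Mode.CanWait, h])
    · rcases hwo t t2 v v2 hl h2 with h | h | h
      · left
        show r = Mode.WO
        cases hr : r with
        | SW => exact absurd (hs (Or.inl hr)) (by simp [View.CanSignal, Mode.CanSignal, h])
        | SO => exact absurd (hs (Or.inr hr)) (by simp [View.CanSignal, Mode.CanSignal, h])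
        | WO => rfl
      · exact Or.inr (Or.inl h)
      · exact Or.inr (Or.inr h)
    · rcases hwo t1 t v1 v h1 hl with h | h | h
      · exact Or.inl h
      · exact Or.inr (Or.inl h)
      · right; right
        show r = Mode.SO
        cases hr : r with
        | SW => exact absurd (hw (Or.inl hr)) (by simp [View.CanWait, Mode.CanWait, h])
        | SO => rfl
        | WO => exact absurd (hw (Or.inr hr)) (by simp [View.CanWait, Mode.CanWait, h])
    · exact hwo t1 t2 v1 v2 h1 h2
  | drop hm =>
    intro t1 t2 v1 v2 h1 h2
    by_cases e1 : t1 = t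
    · subst e1; rw [Finmap.lookup_erase] at h1; exact absurd h1 (by simp)
    · by_cases e2 : t2 = t
      · subst e2; rw [Finmap.lookup_erase] at h2; exact absurd h2 (by simp)
      · rw [Finmap.lookup_erase_ne e1] at h1
        rw [Finmap.lookup_erase_ne e2] at h2
        exact hwo t1 t2 v1 v2 h1 h2
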